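/- arXiv:2010.05891 — 2 statements merged into one kernel-verified Lean document; each statement's English description precedes it below -/
import Mathlib

section
/- Let f: ℝ^n × ℕ → ℝ be convex and continuously differentiable in the first argument with a point x* ∈ ℝ^n satisfying f(x,k) ≥ f(x*,k) = 0 for all x ∈ ℝ^n and all k ∈ ℕ. Let g: ℝ^n → ℝ be strictly convex and continuously differentiable, let D be the Bregman distance induced by g, and assume D is convex in its second argument. Let λ_max ∈ [0,1), λ_{k+1} ∈ [0, λ_max], and define x*_{k+1} = argmin_x f(x,k) + D(x, x̃_k) and x̃_{k+1} = (1−λ_{k+1}) x*_{k+1} + λ_{k+1} x̃_k. Then for every k, D(x*, x̃_{k+1}) − D(x*, x̃_k) ≤ (1 − λ_max)·[ −D(x*_{k+1}, x̃_k) + f(x*,k) − f(x*_{k+1},k) ], and in particular the right-hand side is nonpositive. -/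
/-! The minimality of `x*_{k+1}` for `f(·,k) + D(·, x̃_k)`, combined with the gradient inequality
for `f(·,k)` and the three-point identity for `D`, gives the Bregman proximal inequality
`D(x*, x*_{k+1}) − D(x*, x̃_k) ≤ −D(x*_{k+1}, x̃_k) + f(x*,k) − f(x*_{k+1},k) ≤ 0`.
Since `x̃_{k+1}` is a convex combination of `x*_{k+1}` and `x̃_k`, convexity of `D(x*, ·)`
scales this decrease by `1 − λ_{k+1} ≥ 1 − λ_max`. -/

/-- The Bregman distance induced by `g`:
`D(x,y) = g(x) − g(y) − (x − y)ᵀ∇g(y)`. -/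
noncomputable def breg {E : Type*} [NormedAddCommGroup E] [NormedSpace ℝ E]
    (g : E → ℝ) (x y : E) : ℝ :=
  g x - g y - fderiv ℝ g y (x - y)

open Set

section Bregman

variable {E : Type*} [NormedAddCommGroup E] [NormedSpace ℝ E]

theorem ConvexOn.add_le_of_hasFDerivAt {φ : E → ℝ} (hφ : ConvexOn ℝ univ φ) {L : E →L[ℝ] ℝ}
    {p : E} (hL : HasFDerivAt φ L p) (x : E) : φ p + L (x - p) ≤ φ x := by
  have hline : ConvexOn ℝ univ (φ ∘ (AffineMap.lineMap p x : ℝ → E)) := by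
    simpa using hφ.comp_affineMap (AffineMap.lineMap (k := ℝ) p x)
  have hder : HasDerivAt (φ ∘ (AffineMap.lineMap p x : ℝ → E)) (L (x - p)) 0 := by
    refine HasFDerivAt.comp_hasDerivAt (0 : ℝ) ?_ AffineMap.hasDerivAt_lineMap
    simpa using hL
  have hslope := hline.le_slope_of_hasDerivAt (mem_univ 0) (mem_univ 1) one_pos hder
  simp only [slope, sub_zero, inv_one, one_smul, Function.comp_apply,
    AffineMap.lineMap_apply_one, AffineMap.lineMap_apply_zero, vsub_eq_sub] at hslope
  linarith

theorem breg_nonneg {g : E → ℝ} (hg : ConvexOn ℝ univ g) {y : E} (hy : DifferentiableAt ℝ g y)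
    (x : E) : 0 ≤ breg g x y := by
  have := hg.add_le_of_hasFDerivAt hy.hasFDerivAt x
  rw [breg]
  linarith

theorem breg_three_point (g : E → ℝ) (x y p : E) :
    breg g x y = breg g x p + breg g p y + (fderiv ℝ g p - fderiv ℝ g y) (x - p) := by
  simp only [breg, sub_apply, map_sub]
  ring

theorem hasFDerivAt_breg_left {g : E → ℝ} {G : E →L[ℝ] ℝ} {p : E} (hg : HasFDerivAt g G p)
    (y : E) : HasFDerivAt (fun x => breg g x y) (G - fderiv ℝ g y) p := by
  have hlin : HasFDerivAt (fun x => fderiv ℝ g y (x - y)) (fderiv ℝ g y) p :=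
    (fderiv ℝ g y).hasFDerivAt.comp p ((hasFDerivAt_id p).sub_const y)
  exact (hg.sub_const (g y)).sub hlin

theorem add_breg_add_breg_le_of_isMinOn {f g : E → ℝ} (hf : ConvexOn ℝ univ f) {p y : E}
    (hfp : DifferentiableAt ℝ f p) (hgp : DifferentiableAt ℝ g p)
    (hmin : IsMinOn (fun x => f x + breg g x y) univ p) (x : E) :
    f p + breg g p y + breg g x p ≤ f x + breg g x y := by
  have hder := hfp.hasFDerivAt.add (hasFDerivAt_breg_left hgp.hasFDerivAt y)
  have hopt := (hmin.isLocalMin Filter.univ_mem).hasFDerivAt_eq_zero hder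
  have hopt_x : fderiv ℝ f p (x - p) + (fderiv ℝ g p - fderiv ℝ g y) (x - p) = 0 := by
    simpa using congrArg (fun L : E →L[ℝ] ℝ => L (x - p)) hopt
  have hgrad := hf.add_le_of_hasFDerivAt hfp.hasFDerivAt x
  rw [breg_three_point g x y p]
  linarith

end Bregman

theorem stmt8_general (n : ℕ) (f : EuclideanSpace ℝ (Fin n) → ℕ → ℝ)
    (hfconv : ∀ k, ConvexOn ℝ Set.univ (f · k))
    (hfdiff : ∀ k, ContDiff ℝ 1 (f · k))
    (xs : EuclideanSpace ℝ (Fin n))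
    (hxs : ∀ k, f xs k = 0) (hfpos : ∀ x k, 0 ≤ f x k)
    (g : EuclideanSpace ℝ (Fin n) → ℝ)
    (hg : StrictConvexOn ℝ Set.univ g) (hgdiff : ContDiff ℝ 1 g)
    (hDconv : ∀ x, ConvexOn ℝ Set.univ (fun y => breg g x y))
    (lammax : ℝ) (hlm1 : lammax < 1)
    (lam : ℕ → ℝ) (hlam : ∀ k, lam (k + 1) ∈ Set.Icc 0 lammax)
    (xstar xtilde : ℕ → EuclideanSpace ℝ (Fin n))
    (hmin : ∀ k, ∀ x, f (xstar (k + 1)) k + breg g (xstar (k + 1)) (xtilde k)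
      ≤ f x k + breg g x (xtilde k))
    (hupd : ∀ k, xtilde (k + 1)
      = (1 - lam (k + 1)) • xstar (k + 1) + lam (k + 1) • xtilde k) :
    ∀ k : ℕ,
      breg g xs (xtilde (k + 1)) - breg g xs (xtilde k)
        ≤ (1 - lammax) *
            (-(breg g (xstar (k + 1)) (xtilde k)) + f xs k - f (xstar (k + 1)) k) ∧
      (1 - lammax) *
          (-(breg g (xstar (k + 1)) (xtilde k)) + f xs k - f (xstar (k + 1)) k) ≤ 0 := by
  intro k
  obtain ⟨hl0, hl1⟩ := hlam k
  have hgd : Differentiable ℝ g := hgdiff.differentiable one_ne_zero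
  have hprox := add_breg_add_breg_le_of_isMinOn (hfconv k)
    ((hfdiff k).differentiable one_ne_zero _) (hgd _) (fun x _ => hmin k x) xs
  have hrelax := (hDconv xs).2 (mem_univ (xstar (k + 1))) (mem_univ (xtilde k))
    (by linarith) hl0 (sub_add_cancel 1 (lam (k + 1)))
  rw [← hupd k, smul_eq_mul, smul_eq_mul] at hrelax
  set Q := -(breg g (xstar (k + 1)) (xtilde k)) + f xs k - f (xstar (k + 1)) k
  have hQ : Q ≤ 0 := by
    linarith [breg_nonneg hg.convexOn (hgd (xtilde k)) (xstar (k + 1)), hxs k,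
      hfpos (xstar (k + 1)) k]
  refine ⟨?_, mul_nonpos_of_nonneg_of_nonpos (by linarith) hQ⟩
  calc breg g xs (xtilde (k + 1)) - breg g xs (xtilde k)
      ≤ (1 - lam (k + 1)) * (breg g xs (xstar (k + 1)) - breg g xs (xtilde k)) := by linarith
    _ ≤ (1 - lam (k + 1)) * Q := mul_le_mul_of_nonneg_left (by linarith) (by linarith)
    _ ≤ (1 - lammax) * Q := mul_le_mul_of_nonpos_right (by linarith) hQ

/-- the descent inequality (equation (34) of the paper) for the
relaxed proximal iteration:
`D(x*, x̃_{k+1}) − D(x*, x̃_k) ≤ (1 − λ_max)[−D(x*_{k+1}, x̃_k) + f(x*,k) − f(x*_{k+1},k)]`,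
and the right-hand side is nonpositive. -/
theorem stmt8 (n : ℕ) (f : EuclideanSpace ℝ (Fin n) → ℕ → ℝ)
    (hfconv : ∀ k, ConvexOn ℝ Set.univ (f · k))
    (hfdiff : ∀ k, ContDiff ℝ 1 (f · k))
    (xs : EuclideanSpace ℝ (Fin n))
    (hxs : ∀ k, f xs k = 0) (hfpos : ∀ x k, 0 ≤ f x k)
    (g : EuclideanSpace ℝ (Fin n) → ℝ)
    (hg : StrictConvexOn ℝ Set.univ g) (hgdiff : ContDiff ℝ 1 g)
    (hDconv : ∀ x, ConvexOn ℝ Set.univ (fun y => breg g x y))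
    (lammax : ℝ) (hlm0 : 0 ≤ lammax) (hlm1 : lammax < 1)
    (lam : ℕ → ℝ) (hlam : ∀ k, lam (k + 1) ∈ Set.Icc 0 lammax)
    (xstar xtilde : ℕ → EuclideanSpace ℝ (Fin n))
    (hmin : ∀ k, ∀ x, f (xstar (k + 1)) k + breg g (xstar (k + 1)) (xtilde k)
      ≤ f x k + breg g x (xtilde k))
    (hupd : ∀ k, xtilde (k + 1)
      = (1 - lam (k + 1)) • xstar (k + 1) + lam (k + 1) • xtilde k) :
    ∀ k : ℕ,
      breg g xs (xtilde (k + 1)) - breg g xs (xtilde k)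
        ≤ (1 - lammax) *
            (-(breg g (xstar (k + 1)) (xtilde k)) + f xs k - f (xstar (k + 1)) k) ∧
      (1 - lammax) *
          (-(breg g (xstar (k + 1)) (xtilde k)) + f xs k - f (xstar (k + 1)) k) ≤ 0 :=
  stmt8_general n f hfconv hfdiff xs hxs hfpos g hg hgdiff hDconv lammax hlm1 lam hlam xstar xtilde
    hmin hupd
end

section
/- Consider the proximity-based estimation scheme producing iterates θ̃(k) with θ̃(k)ᵀ = [vec(A(k))ᵀ, vec(B(k))ᵀ], A(k) ∈ ℝ^{n̄×n̄}, B(k) ∈ ℝ^{n̄×q̄}, q̄ ≤ n̄, where at each step θ*(k) is first computed and then θ̃(k) = (1−λ_k)θ*(k) + λ_k θ̃(k−1) with λ_k ∈ [0, λ_max], λ_max ∈ (0,1). If the initialization (A(0), B(0)) is controllable, then there exists a sequence {λ_k}_{k∈ℕ} with λ_k ∈ [0, λ_max) such that for every k ∈ ℕ the pair (A(k), B(k)) obtained from θ̃(k) is controllable. -/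
open Matrix Filter Topology

/-- The stacked data vector `s(k) = [x(k)ᵀ, …, x(k−N̄+1)ᵀ]ᵀ`. -/
def sVec {nb : ℕ} (Nb : ℕ) (x : ℤ → Fin nb → ℝ) (k : ℕ) :
    Fin Nb × Fin nb → ℝ :=
  fun ja => x ((k : ℤ) - (ja.1 : ℕ)) ja.2

/-- The regression matrix `R(k)` whose `j`-th block row is
`[x(k−j)ᵀ ⊗ I, u(k−j)ᵀ ⊗ I]` (for `j = 1, …, N̄`), acting on parameter vectors
`θᵀ = [vec(A)ᵀ, vec(B)ᵀ]`. -/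
def Rmat {nb qb : ℕ} (Nb : ℕ) (x : ℤ → Fin nb → ℝ) (u : ℤ → Fin qb → ℝ)
    (k : ℕ) :
    Matrix (Fin Nb × Fin nb) ((Fin nb × Fin nb) ⊕ (Fin nb × Fin qb)) ℝ :=
  Matrix.of fun ja idx =>
    match idx with
    | Sum.inl bc => if bc.1 = ja.2 then x ((k : ℤ) - (ja.1 : ℕ) - 1) bc.2 else 0
    | Sum.inr bc => if bc.1 = ja.2 then u ((k : ℤ) - (ja.1 : ℕ) - 1) bc.2 else 0

/-- The matrix `A(k)` encoded in a parameter vector `θ` via `vec(A)`. -/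
def matA {nb qb : ℕ} (θ : (Fin nb × Fin nb) ⊕ (Fin nb × Fin qb) → ℝ) :
    Matrix (Fin nb) (Fin nb) ℝ :=
  Matrix.of fun a b => θ (Sum.inl (a, b))

/-- The matrix `B(k)` encoded in a parameter vector `θ` via `vec(B)`. -/
def matB {nb qb : ℕ} (θ : (Fin nb × Fin nb) ⊕ (Fin nb × Fin qb) → ℝ) :
    Matrix (Fin nb) (Fin qb) ℝ :=
  Matrix.of fun a b => θ (Sum.inr (a, b))

/-- The controllability matrix `[B, AB, …, A^{n−1}B]`. -/
noncomputable def ctrb {n q : ℕ} (A : Matrix (Fin n) (Fin n) ℝ)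
    (B : Matrix (Fin n) (Fin q) ℝ) : Matrix (Fin n) (Fin n × Fin q) ℝ :=
  Matrix.of fun i jl => (A ^ (jl.1 : ℕ) * B) i jl.2

/-- A pair `(A, B)` is controllable if its controllability matrix has rank `n`. -/
def IsControllable {n q : ℕ} (A : Matrix (Fin n) (Fin n) ℝ)
    (B : Matrix (Fin n) (Fin q) ℝ) : Prop :=
  (ctrb A B).rank = n


/-- Auxiliary: a square real matrix has full rank iff its determinant is nonzero. -/
lemma auxRankEqIffDet {n : ℕ} (M : Matrix (Fin n) (Fin n) ℝ) : M.rank = n ↔ M.det ≠ 0 := by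
  constructor
  · intro h hd
    have hsur : Function.Surjective M.mulVec := by
      have htop : LinearMap.range M.mulVecLin = ⊤ := by
        apply Submodule.eq_top_of_finrank_eq
        rw [← Matrix.rank, h, Module.finrank_pi]
        simp
      intro v
      have hv := htop ▸ Submodule.mem_top (x := v)
      obtain ⟨w, hw⟩ := LinearMap.mem_range.mp hv
      exact ⟨w, hw⟩
    have := Matrix.mulVec_surjective_iff_isUnit.mp hsur
    rw [Matrix.isUnit_iff_isUnit_det M, isUnit_iff_ne_zero] at this
    exact this hd
  · intro hd
    have : IsUnit M := (Matrix.isUnit_iff_isUnit_det M).mpr (isUnit_iff_ne_zero.mpr hd)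
    simpa using Matrix.rank_of_isUnit M this

/-- Controllability via the Gramian determinant. -/
lemma auxIsControllableIffDet {n q : ℕ} (A : Matrix (Fin n) (Fin n) ℝ)
    (B : Matrix (Fin n) (Fin q) ℝ) :
    IsControllable A B ↔ (ctrb A B * (ctrb A B)ᵀ).det ≠ 0 := by
  unfold IsControllable
  rw [← Matrix.rank_self_mul_transpose, auxRankEqIffDet]

/-- Polynomial-entried controllability matrix. -/
noncomputable def ctrbP {n q : ℕ} (A : Matrix (Fin n) (Fin n) (Polynomial ℝ))
    (B : Matrix (Fin n) (Fin q) (Polynomial ℝ)) :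
    Matrix (Fin n) (Fin n × Fin q) (Polynomial ℝ) :=
  Matrix.of fun i jl => (A ^ (jl.1 : ℕ) * B) i jl.2

lemma ctrbP_map {n q : ℕ} (A : Matrix (Fin n) (Fin n) (Polynomial ℝ))
    (B : Matrix (Fin n) (Fin q) (Polynomial ℝ)) (t : ℝ) :
    (ctrbP A B).map (Polynomial.eval t)
      = ctrb (A.map (Polynomial.eval t)) (B.map (Polynomial.eval t)) := by
  ext i jl
  have hpow : (A ^ (jl.1 : ℕ)).map (Polynomial.eval t)
      = (A.map (Polynomial.eval t)) ^ (jl.1 : ℕ) := by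
    have := map_pow ((Polynomial.evalRingHom t).mapMatrix :
      Matrix (Fin n) (Fin n) (Polynomial ℝ) →+* Matrix (Fin n) (Fin n) ℝ) A (jl.1 : ℕ)
    simpa [RingHom.mapMatrix_apply, Polynomial.coe_evalRingHom] using this
  have h : ((A ^ (jl.1 : ℕ) * B)).map (Polynomial.eval t)
      = (A.map (Polynomial.eval t)) ^ (jl.1 : ℕ) * (B.map (Polynomial.eval t)) := by
    rw [← Polynomial.coe_evalRingHom] at hpow ⊢
    rw [Matrix.map_mul, hpow]
  calc ((ctrbP A B).map (Polynomial.eval t)) i jl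
      = ((A ^ (jl.1 : ℕ) * B).map (Polynomial.eval t)) i jl.2 := rfl
    _ = ((A.map (Polynomial.eval t)) ^ (jl.1 : ℕ) * (B.map (Polynomial.eval t))) i jl.2 := by
        rw [h]
    _ = ctrb (A.map (Polynomial.eval t)) (B.map (Polynomial.eval t)) i jl := rfl

/-- Lemma 5 of the paper: a suitable mixing parameter in `[0, lammax)` keeps the
convex combination controllable, provided the second pair is controllable. -/
lemma auxExistsGoodLam {nb qb : ℕ} {lammax : ℝ} (h0 : 0 < lammax)
    (θa θb : (Fin nb × Fin nb) ⊕ (Fin nb × Fin qb) → ℝ) :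
    ∃ l : ℝ, 0 ≤ l ∧ l < lammax ∧
      (IsControllable (matA θb) (matB θb) →
        IsControllable (matA ((1 - l) • θa + l • θb))
          (matB ((1 - l) • θa + l • θb))) := by
  by_cases hb : IsControllable (matA θb) (matB θb)
  case neg => exact ⟨0, le_refl 0, h0, fun h => absurd h hb⟩
  case pos =>
    set Ap : Matrix (Fin nb) (Fin nb) (Polynomial ℝ) := Matrix.of fun i j =>
      Polynomial.C (matA θa i j) * (1 - Polynomial.X)
        + Polynomial.C (matA θb i j) * Polynomial.X with hApdef
    set Bp : Matrix (Fin nb) (Fin qb) (Polynomial ℝ) := Matrix.of fun i j =>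
      Polynomial.C (matB θa i j) * (1 - Polynomial.X)
        + Polynomial.C (matB θb i j) * Polynomial.X with hBpdef
    have hmapA : ∀ t : ℝ, Ap.map (Polynomial.eval t)
        = matA ((1 - t) • θa + t • θb) := by
      intro t; ext i j
      simp only [hApdef, Matrix.map_apply, Matrix.of_apply, Polynomial.eval_add,
        Polynomial.eval_mul, Polynomial.eval_C, Polynomial.eval_sub,
        Polynomial.eval_one, Polynomial.eval_X, matA, Pi.add_apply, Pi.smul_apply,
        smul_eq_mul]
      ring
    have hmapB : ∀ t : ℝ, Bp.map (Polynomial.eval t)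
        = matB ((1 - t) • θa + t • θb) := by
      intro t; ext i j
      simp only [hBpdef, Matrix.map_apply, Matrix.of_apply, Polynomial.eval_add,
        Polynomial.eval_mul, Polynomial.eval_C, Polynomial.eval_sub,
        Polynomial.eval_one, Polynomial.eval_X, matB, Pi.add_apply, Pi.smul_apply,
        smul_eq_mul]
      ring
    set p : Polynomial ℝ := ((ctrbP Ap Bp) * (ctrbP Ap Bp)ᵀ).det with hpdef
    have heval : ∀ t : ℝ, p.eval t =
        (ctrb (matA ((1 - t) • θa + t • θb)) (matB ((1 - t) • θa + t • θb)) *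
         (ctrb (matA ((1 - t) • θa + t • θb)) (matB ((1 - t) • θa + t • θb)))ᵀ).det := by
      intro t
      have h1 : (Polynomial.evalRingHom t) p
          = (((ctrbP Ap Bp) * (ctrbP Ap Bp)ᵀ).map (Polynomial.evalRingHom t)).det :=
        RingHom.map_det _ _
      have h2 : (((ctrbP Ap Bp) * (ctrbP Ap Bp)ᵀ).map (Polynomial.evalRingHom t))
          = ((ctrbP Ap Bp).map (Polynomial.evalRingHom t)) *
            ((ctrbP Ap Bp).map (Polynomial.evalRingHom t))ᵀ := by
        rw [Matrix.map_mul]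
        rw [Matrix.transpose_map]
      have h3 : ((ctrbP Ap Bp).map (Polynomial.evalRingHom t))
          = ctrb (matA ((1 - t) • θa + t • θb)) (matB ((1 - t) • θa + t • θb)) := by
        rw [Polynomial.coe_evalRingHom, ctrbP_map, hmapA, hmapB]
      rw [Polynomial.coe_evalRingHom] at h1 h2 h3
      rw [h1, h2, h3]
    have hpne : p ≠ 0 := by
      intro hzero
      have hcomb : (1 - (1 : ℝ)) • θa + (1 : ℝ) • θb = θb := by
        funext idx; simp
      have h1 := heval 1
      rw [hcomb, hzero] at h1
      exact (auxIsControllableIffDet (matA θb) (matB θb)).mp hb (by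
        simpa using h1.symm)
    have hfin : Set.Finite { x : ℝ | p.IsRoot x } := Polynomial.finite_setOf_isRoot hpne
    have hinf : (Set.Ico (0 : ℝ) lammax).Infinite := Set.Ico_infinite h0
    obtain ⟨l, hl⟩ := (hinf.diff hfin).nonempty
    refine ⟨l, hl.1.1, hl.1.2, fun _ => ?_⟩
    have hroot : p.eval l ≠ 0 := hl.2
    rw [heval l] at hroot
    exact (auxIsControllableIffDet _ _).mpr hroot

/-- Theorem 2(iii) of the paper: if the initialization
`(A(0), B(0))` of the proximity-based estimation scheme is controllable, then
the relaxation parameters `λ_k ∈ [0, λ_max)` can be chosen so that every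
iterate `θ̃(k)` corresponds to a controllable pair `(A(k), B(k))`. -/
theorem stmt13 (nb qb Nb : ℕ) (hq : qb ≤ nb)
    (x : ℤ → Fin nb → ℝ) (u : ℤ → Fin qb → ℝ)
    -- the objective c
    (c : (Fin Nb × Fin nb → ℝ) → ℕ → ℝ)
    (hcconv : ∀ k, StrictConvexOn ℝ Set.univ (c · k))
    (hcdiff : ∀ k, ContDiff ℝ 1 (c · k))
    (hczero : ∀ (k : ℕ) (e : Fin Nb × Fin nb → ℝ), e ≠ 0 → c 0 k < c e k)
    -- the Bregman distance generator g
    (g : ((Fin nb × Fin nb) ⊕ (Fin nb × Fin qb) → ℝ) → ℝ)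
    (hgconv : StrictConvexOn ℝ Set.univ g) (hgdiff : ContDiff ℝ 1 g)
    (hDconv : ∀ θ, ConvexOn ℝ Set.univ (fun y => breg g θ y))
    -- the proximal subproblems admit minimizers
    (hex : ∀ (k : ℕ) (θp : (Fin nb × Fin nb) ⊕ (Fin nb × Fin qb) → ℝ),
      ∃ θm, ∀ θ' : (Fin nb × Fin nb) ⊕ (Fin nb × Fin qb) → ℝ,
        c (sVec Nb x k - (Rmat Nb x u k).mulVec θm) k + breg g θm θp
          ≤ c (sVec Nb x k - (Rmat Nb x u k).mulVec θ') k + breg g θ' θp)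
    (lammax : ℝ) (hlm : lammax ∈ Set.Ioo (0 : ℝ) 1)
    -- controllable initialization θ̃(0)
    (θinit : (Fin nb × Fin nb) ⊕ (Fin nb × Fin qb) → ℝ)
    (hinit : IsControllable (matA θinit) (matB θinit)) :
    ∃ (lam : ℕ → ℝ)
      (θstar θtilde : ℕ → ((Fin nb × Fin nb) ⊕ (Fin nb × Fin qb) → ℝ)),
      (∀ k, 0 ≤ lam k ∧ lam k < lammax) ∧
      θtilde 0 = θinit ∧
      (∀ k : ℕ,
        (∀ θ' : (Fin nb × Fin nb) ⊕ (Fin nb × Fin qb) → ℝ,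
          c (sVec Nb x (k + 1) - (Rmat Nb x u (k + 1)).mulVec (θstar (k + 1))) (k + 1)
              + breg g (θstar (k + 1)) (θtilde k)
            ≤ c (sVec Nb x (k + 1) - (Rmat Nb x u (k + 1)).mulVec θ') (k + 1)
              + breg g θ' (θtilde k)) ∧
        θtilde (k + 1)
          = (1 - lam (k + 1)) • θstar (k + 1) + lam (k + 1) • θtilde k) ∧
      (∀ k : ℕ, IsControllable (matA (θtilde k)) (matB (θtilde k))) := by
  classical
  choose θm hθm using hex
  choose lfun hl0 hl1 hl2 using
    fun (θa θb : (Fin nb × Fin nb) ⊕ (Fin nb × Fin qb) → ℝ) =>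
      auxExistsGoodLam hlm.1 θa θb
  let θt : ℕ → ((Fin nb × Fin nb) ⊕ (Fin nb × Fin qb) → ℝ) := fun k =>
    Nat.rec θinit (fun n prev =>
      (1 - lfun (θm (n + 1) prev) prev) • θm (n + 1) prev
        + (lfun (θm (n + 1) prev) prev) • prev) k
  refine ⟨fun k => Nat.rec 0 (fun n _ => lfun (θm (n + 1) (θt n)) (θt n)) k,
    fun k => Nat.rec θinit (fun n _ => θm (n + 1) (θt n)) k, θt, ?_, rfl, ?_, ?_⟩
  · intro k
    cases k with
    | zero => exact ⟨le_refl 0, hlm.1⟩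
    | succ n => exact ⟨hl0 _ _, hl1 _ _⟩
  · intro k
    exact ⟨fun θ' => hθm (k + 1) (θt k) θ', rfl⟩
  · intro k
    induction k with
    | zero => exact hinit
    | succ n ih => exact hl2 (θm (n + 1) (θt n)) (θt n) ih
end
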